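/- arXiv:2307.02805 — 4 statements merged into one kernel-verified Lean document; each statement's English description precedes it below -/
import Mathlib

section
/- For any classical first-order formula φ whose only predicate symbol is a binary predicate P, let φ* be the modal formula obtained by replacing every atomic subformula P(x,y) with ◇(Q₁(x) ∧ Q₂(y)), where Q₁, Q₂ are fresh unary predicate letters. Then φ is classically satisfiable if and only if φ* is satisfiable in a Kripke model for QS5 (with constant domain). -/
/-- Classical first-order formulas over a single binary predicate `P`. -/
inductive FOF : Type
  | atom : ℕ → ℕ → FOF
  | fls : FOF
  | neg : FOF → FOF
  | imp : FOF → FOF → FOF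
  | and : FOF → FOF → FOF
  | or : FOF → FOF → FOF
  | all : ℕ → FOF → FOF
  | ex : ℕ → FOF → FOF

/-- Classical satisfaction in a structure `(D, R)` under assignment `σ`. -/
def FOSat {D : Type} (R : D → D → Prop) : (ℕ → D) → FOF → Prop
  | σ, .atom x y => R (σ x) (σ y)
  | _, .fls => False
  | σ, .neg φ => ¬ FOSat R σ φ
  | σ, .imp φ ψ => FOSat R σ φ → FOSat R σ ψ
  | σ, .and φ ψ => FOSat R σ φ ∧ FOSat R σ ψ
  | σ, .or φ ψ => FOSat R σ φ ∨ FOSat R σ ψ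
  | σ, .all x φ => ∀ d : D, FOSat R (Function.update σ x d) φ
  | σ, .ex x φ => ∃ d : D, FOSat R (Function.update σ x d) φ

/-- Monadic modal formulas with two unary predicate letters `Q₁, Q₂` (indices in `Fin 2`). -/
inductive MF : Type
  | pred : Fin 2 → ℕ → MF
  | fls : MF
  | neg : MF → MF
  | imp : MF → MF → MF
  | and : MF → MF → MF
  | or : MF → MF → MF
  | box : MF → MF
  | dia : MF → MF
  | all : ℕ → MF → MF
  | ex : ℕ → MF → MF

/-- Satisfaction at a world of an S5 (universal accessibility) Kripke model with
constant domain `D`, worlds `W`, and valuation `V` of the unary predicates. -/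
def MSat {W D : Type} (V : Fin 2 → W → D → Prop) : W → (ℕ → D) → MF → Prop
  | w, σ, .pred i x => V i w (σ x)
  | _, _, .fls => False
  | w, σ, .neg φ => ¬ MSat V w σ φ
  | w, σ, .imp φ ψ => MSat V w σ φ → MSat V w σ ψ
  | w, σ, .and φ ψ => MSat V w σ φ ∧ MSat V w σ ψ
  | w, σ, .or φ ψ => MSat V w σ φ ∨ MSat V w σ ψ
  | _, σ, .box φ => ∀ v, MSat V v σ φ
  | _, σ, .dia φ => ∃ v, MSat V v σ φ
  | w, σ, .all x φ => ∀ d, MSat V w (Function.update σ x d) φ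
  | w, σ, .ex x φ => ∃ d, MSat V w (Function.update σ x d) φ

/-- Kripke's trick translation: replace `P(x,y)` by `◇(Q₁(x) ∧ Q₂(y))`;
it commutes with the Boolean connectives and the quantifiers. -/
def tr : FOF → MF
  | .atom x y => .dia (.and (.pred 0 x) (.pred 1 y))
  | .fls => .fls
  | .neg φ => .neg (tr φ)
  | .imp φ ψ => .imp (tr φ) (tr ψ)
  | .and φ ψ => .and (tr φ) (tr ψ)
  | .or φ ψ => .or (tr φ) (tr ψ)
  | .all x φ => .all x (tr φ)
  | .ex x φ => .ex x (tr φ)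

theorem tr_key {W D : Type} (V : Fin 2 → W → D → Prop) (R : D → D → Prop)
    (h : ∀ d e, (∃ v, V 0 v d ∧ V 1 v e) ↔ R d e) :
    ∀ (φ : FOF) (w : W) (σ : ℕ → D), MSat V w σ (tr φ) ↔ FOSat R σ φ := by
  intro φ
  induction φ with
  | atom x y => intro w σ; simpa [tr, MSat, FOSat] using h (σ x) (σ y)
  | fls => intro w σ; simp [tr, MSat, FOSat]
  | neg φ ih => intro w σ; simp [tr, MSat, FOSat, ih]
  | imp φ ψ ih₁ ih₂ => intro w σ; simp [tr, MSat, FOSat, ih₁, ih₂]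
  | and φ ψ ih₁ ih₂ => intro w σ; simp [tr, MSat, FOSat, ih₁, ih₂]
  | or φ ψ ih₁ ih₂ => intro w σ; simp [tr, MSat, FOSat, ih₁, ih₂]
  | all x φ ih => intro w σ; simp [tr, MSat, FOSat, ih]
  | ex x φ ih => intro w σ; simp [tr, MSat, FOSat, ih]

/-- `φ` is classically satisfiable iff `φ*` is satisfiable in an
S5 Kripke model with constant domain. -/
theorem kripke_trick_satisfiability (φ : FOF) :
    (∃ (D : Type) (_ : Nonempty D) (R : D → D → Prop) (σ : ℕ → D), FOSat R σ φ) ↔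
    (∃ (W D : Type) (_ : Nonempty W) (_ : Nonempty D) (V : Fin 2 → W → D → Prop)
      (w : W) (σ : ℕ → D), MSat V w σ (tr φ)) := by
  constructor
  · rintro ⟨D, hD, R, σ, hsat⟩
    refine ⟨D × D, D, ⟨⟨hD.some, hD.some⟩⟩, hD,
      fun i v d => if i = 0 then d = v.1 ∧ R v.1 v.2 else d = v.2 ∧ R v.1 v.2,
      ⟨hD.some, hD.some⟩, σ, ?_⟩
    rw [tr_key _ R (fun d e => ?_)]
    · exact hsat
    · constructor
      · rintro ⟨⟨a, b⟩, ⟨rfl, hr⟩, ⟨rfl, -⟩⟩; exact hr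
      · intro hr; exact ⟨⟨d, e⟩, ⟨rfl, hr⟩, ⟨rfl, hr⟩⟩
  · rintro ⟨W, D, hW, hD, V, w, σ, hsat⟩
    exact ⟨D, hD, fun d e => ∃ v, V 0 v d ∧ V 1 v e, σ,
      (tr_key V _ (fun d e => Iff.rfl) φ w σ).mp hsat⟩
end

section
/- For any symmetric irreflexive binary relation R on a set D, there exists an S5 Kripke model with constant domain D and a single unary predicate Q such that for all a, b ∈ D: R(a,b) holds if and only if ¬◇(Q(a) ∧ Q(b)), i.e. no world makes both Q(a) and Q(b) true. -/
/-- For any symmetric irreflexive binary relation `R` on `D`, there is an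
S5 Kripke model (universal accessibility, constant domain `D`) with a single unary
predicate `Q` such that `R a b` holds iff `¬◇(Q(a) ∧ Q(b))`, i.e. no world makes
both `Q(a)` and `Q(b)` true. -/
theorem s5_simulates_symmetric_irreflexive {D : Type} (R : D → D → Prop)
    (hsym : Symmetric R) (hirr : Irreflexive R) :
    ∃ (W : Type) (_ : Nonempty W) (Q : W → D → Prop),
      ∀ a b : D, R a b ↔ ¬ ∃ w : W, Q w a ∧ Q w b := by
  refine ⟨Option (D × D), ⟨none⟩,
    fun w d => ∃ p : D × D, w = some p ∧ ¬ R p.1 p.2 ∧ (d = p.1 ∨ d = p.2), ?_⟩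
  intro a b
  constructor
  · rintro hR ⟨w, ⟨p, rfl, hnR, ha⟩, ⟨q, hq, hnRq, hb⟩⟩
    cases hq
    rcases ha with rfl | rfl <;> rcases hb with rfl | rfl
    · exact hirr _ hR
    · exact hnR hR
    · exact hnR (hsym hR)
    · exact hirr _ hR
  · intro h
    by_contra hnR
    exact h ⟨some (a, b), ⟨(a, b), rfl, hnR, Or.inl rfl⟩, ⟨(a, b), rfl, hnR, Or.inr rfl⟩⟩
end

section
/- There exists an intuitionistic Kripke frame (a partially ordered set of worlds with monotone domains) for which the three interpretations of equality — (Eq₁) hereditary-up congruence, (Eq₂) hereditary-up-and-down congruence, and (Eq₃) actual identity of domain elements — yield three pairwise distinct sets of valid intuitionistic formulas with equality. Concretely, one can build a frame and exhibit formulas φ₁, φ₂ such that φ₁ is valid under Eq₂ and Eq₃ but not Eq₁, and φ₂ is valid under Eq₃ but not Eq₂. -/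
/-- An intuitionistic Kripke frame: a poset of worlds with monotone domains. -/
structure IFrame where
  W : Type
  le : W → W → Prop
  refl : ∀ w, le w w
  trans : ∀ {u v w}, le u v → le v w → le u w
  antisymm : ∀ {u v}, le u v → le v u → u = v
  D : Type
  Dom : W → Set D
  mono : ∀ {u v}, le u v → Dom u ⊆ Dom v

/-- Intuitionistic first-order formulas with equality (predicate letters of all
arities, applied to lists of variables). -/
inductive IFor : Type
  | pred : ℕ → List ℕ → IFor
  | eq : ℕ → ℕ → IFor
  | fls : IFor
  | and : IFor → IFor → IFor
  | or : IFor → IFor → IFor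
  | imp : IFor → IFor → IFor
  | all : ℕ → IFor → IFor
  | ex : ℕ → IFor → IFor

/-- Intuitionistic forcing, with equality read off an interpretation `E`. -/
def Force (F : IFrame) (V : ℕ → F.W → List F.D → Prop) (E : F.W → F.D → F.D → Prop) :
    F.W → (ℕ → F.D) → IFor → Prop
  | w, σ, .pred p xs => V p w (xs.map σ)
  | w, σ, .eq x y => E w (σ x) (σ y)
  | _, _, .fls => False
  | w, σ, .and φ ψ => Force F V E w σ φ ∧ Force F V E w σ ψ
  | w, σ, .or φ ψ => Force F V E w σ φ ∨ Force F V E w σ ψ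
  | w, σ, .imp φ ψ => ∀ v, F.le w v → Force F V E v σ φ → Force F V E v σ ψ
  | w, σ, .all x φ => ∀ v, F.le w v → ∀ d ∈ F.Dom v, Force F V E v (Function.update σ x d) φ
  | w, σ, .ex x φ => ∃ d ∈ F.Dom w, Force F V E w (Function.update σ x d) φ

/-- Hereditary (monotone) valuations. -/
def MonoV (F : IFrame) (V : ℕ → F.W → List F.D → Prop) : Prop :=
  ∀ p u v ds, F.le u v → V p u ds → V p v ds

/-- `E` is an equivalence at each world. -/
def EquivE (F : IFrame) (E : F.W → F.D → F.D → Prop) : Prop :=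
  ∀ w, Equivalence (E w)

/-- Hereditary-up equality. -/
def HerUpE (F : IFrame) (E : F.W → F.D → F.D → Prop) : Prop :=
  ∀ u v a b, F.le u v → E u a b → E v a b

/-- Hereditary-down equality (on the smaller domain). -/
def HerDownE (F : IFrame) (E : F.W → F.D → F.D → Prop) : Prop :=
  ∀ u v a b, F.le u v → a ∈ F.Dom u → b ∈ F.Dom u → E v a b → E u a b

/-- `E` is a congruence w.r.t. the valuation `V`. -/
def CongrE (F : IFrame) (V : ℕ → F.W → List F.D → Prop) (E : F.W → F.D → F.D → Prop) : Prop :=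
  ∀ w p as bs, List.Forall₂ (E w) as bs → (V p w as ↔ V p w bs)

/-- `E` is actual identity of domain elements. -/
def IdE (F : IFrame) (E : F.W → F.D → F.D → Prop) : Prop :=
  ∀ w a b, E w a b ↔ a = b

/-- Validity in the frame `F` with admissible equality interpretations cut out by `C`:
every model whose valuation is hereditary and whose equality is a hereditary-up
congruence satisfying `C` forces `φ` at every world under every assignment. -/
def ValidE (F : IFrame) (C : (F.W → F.D → F.D → Prop) → Prop) (φ : IFor) : Prop :=
  ∀ (V : ℕ → F.W → List F.D → Prop) (E : F.W → F.D → F.D → Prop),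
    MonoV F V → EquivE F E → HerUpE F E → CongrE F V E → C E →
    ∀ (w : F.W) (σ : ℕ → F.D), (∀ k, σ k ∈ F.Dom w) → Force F V E w σ φ

/-- Our concrete frame: two worlds `false ≤ true`, constant full domain `ℕ`. -/
abbrev F0 : IFrame where
  W := Bool
  le := (· ≤ ·)
  refl := le_refl
  trans := le_trans
  antisymm := le_antisymm
  D := ℕ
  Dom := fun _ => Set.univ
  mono := fun _ => subset_rfl

/-- there is an intuitionistic Kripke frame for which the three
interpretations of equality — (Eq₁) hereditary-up congruence, (Eq₂) hereditary-up-
and-down congruence, (Eq₃) actual identity — yield three pairwise distinct sets of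
valid formulas: there are `φ₁` valid under Eq₂ and Eq₃ but not Eq₁, and `φ₂` valid
under Eq₃ but not Eq₂. -/

theorem three_equalities_distinguishable :
    ∃ (F : IFrame) (φ₁ φ₂ : IFor),
      ValidE F (fun E => HerDownE F E) φ₁ ∧
      ValidE F (fun E => IdE F E) φ₁ ∧
      ¬ ValidE F (fun _ => True) φ₁ ∧
      ValidE F (fun E => IdE F E) φ₂ ∧
      ¬ ValidE F (fun E => HerDownE F E) φ₂ := by
  classical
  refine ⟨F0, .or (.eq 0 1) (.imp (.eq 0 1) .fls), .ex 0 (.ex 1 (.imp (.eq 0 1) .fls)),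
    ?_, ?_, ?_, ?_, ?_⟩
  · -- φ₁ valid under Eq₂
    intro V E _ _ _ _ hD w σ hσ
    simp only [Force]
    by_cases h : E w (σ 0) (σ 1)
    · exact Or.inl h
    · exact Or.inr fun v hv hvE => h (hD w v _ _ hv (hσ 0) (hσ 1) hvE)
  · -- φ₁ valid under Eq₃
    intro V E _ _ _ _ hId w σ hσ
    simp only [Force]
    by_cases h : σ 0 = σ 1
    · exact Or.inl ((hId w _ _).mpr h)
    · exact Or.inr fun v hv hvE => h ((hId v _ _).mp hvE)
  · -- φ₁ not valid under Eq₁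
    intro H
    have h := H (fun _ _ _ => True) (fun w a b => w = true ∨ a = b)
      (fun _ _ _ _ _ _ => trivial)
      (fun w => ⟨fun a => Or.inr rfl,
        fun h => h.elim Or.inl (fun e => Or.inr e.symm),
        fun h h' => h.elim Or.inl (fun e => e ▸ h')⟩)
      (fun u v a b huv h => h.elim (fun hu => Or.inl (by
          subst hu
          cases v
          · exact absurd huv (by decide)
          · rfl)) Or.inr)
      (fun _ _ _ _ _ => Iff.rfl) trivial false id (fun _ => trivial)
    simp only [Force] at h
    rcases h with h | h
    · simp at h
    · exact h true (by decide) (Or.inl rfl)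
  · -- φ₂ valid under Eq₃
    intro V E _ _ _ _ hId w σ hσ
    refine ⟨(0 : ℕ), trivial, (1 : ℕ), trivial, fun v hv hvE => ?_⟩
    have := (hId v _ _).mp hvE
    simp [Function.update] at this
  · -- φ₂ not valid under Eq₂
    intro H
    have h := H (fun _ _ _ => True) (fun _ _ _ => True)
      (fun _ _ _ _ _ _ => trivial)
      (fun _ => ⟨fun _ => trivial, fun _ => trivial, fun _ _ => trivial⟩)
      (fun _ _ _ _ _ _ => trivial)
      (fun _ _ _ _ _ => Iff.rfl)
      (fun _ _ _ _ _ _ _ _ => trivial)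
      false id (fun _ => trivial)
    obtain ⟨d, -, d', -, h⟩ := h
    exact h false (le_refl _) trivial
end

section
/- The translation φ ↦ φ* replacing P(x,y) by ◇(Q₁(x) ∧ Q₂(y)) preserves and reflects truth: for any first-order structure (D, R) with binary relation R, construct the S5 model M_R with worlds W = R (one world per related pair), constant domain D, and w=(a,b) ⊨ Q₁(c) iff c=a, w ⊨ Q₂(c) iff c=b. Then for every first-order formula φ over P and every assignment σ, (D,R) ⊨ φ[σ] iff M_R, w ⊨ φ*[σ] for every (equivalently, some) world w. -/
/-- Worlds of the model `M_R`: one world per `R`-related pair, plus one dummy world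
(`none`), so that `M_R` is a model even when `R` is empty. -/
def WR {D : Type} (R : D → D → Prop) : Type :=
  Option {p : D × D // R p.1 p.2}

/-- Interpretation of `Q₁` in `M_R`: at the world `(a, b)`, `Q₁` holds exactly of `a`;
at the dummy world, `Q₁` is empty. -/
def V₁ {D : Type} (R : D → D → Prop) : WR R → D → Prop
  | none, _ => False
  | some p, c => c = p.1.1

/-- Interpretation of `Q₂` in `M_R`: at the world `(a, b)`, `Q₂` holds exactly of `b`;
at the dummy world, `Q₂` is empty. -/
def V₂ {D : Type} (R : D → D → Prop) : WR R → D → Prop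
  | none, _ => False
  | some p, c => c = p.1.2

lemma key {D : Type} (R : D → D → Prop) (φ : FOF) :
    ∀ (σ : ℕ → D) (w : WR R), FOSat R σ φ ↔ MSat ![V₁ R, V₂ R] w σ (tr φ) := by
  induction φ with
  | atom x y =>
    intro σ w
    show R (σ x) (σ y) ↔ ∃ v : WR R, V₁ R v (σ x) ∧ V₂ R v (σ y)
    constructor
    · intro h; exact ⟨some ⟨(σ x, σ y), h⟩, rfl, rfl⟩
    · rintro ⟨v, h1, h2⟩
      cases v with
      | none => exact absurd h1 id
      | some p => rw [show V₁ R (some p) (σ x) = (σ x = p.1.1) from rfl] at h1; rw [show V₂ R (some p) (σ y) = (σ y = p.1.2) from rfl] at h2; rw [h1, h2]; exact p.2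
  | fls => intro σ w; exact Iff.rfl
  | neg φ ih => intro σ w; exact not_congr (ih σ w)
  | imp φ ψ ih1 ih2 => intro σ w; exact imp_congr (ih1 σ w) (ih2 σ w)
  | and φ ψ ih1 ih2 => intro σ w; exact and_congr (ih1 σ w) (ih2 σ w)
  | or φ ψ ih1 ih2 => intro σ w; exact or_congr (ih1 σ w) (ih2 σ w)
  | all x φ ih => intro σ w; exact forall_congr' fun d => ih _ w
  | ex x φ ih => intro σ w; exact exists_congr fun d => ih _ w

/-- the translation `φ ↦ φ*` replacing `P(x,y)` by `◇(Q₁(x) ∧ Q₂(y))`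
preserves and reflects truth: for every first-order structure `(D, R)` and every
assignment `σ`, `(D, R) ⊨ φ[σ]` iff `M_R, w ⊨ φ*[σ]` for every — equivalently,
for some — world `w` of the S5 model `M_R`. -/
theorem translation_preserves_and_reflects_truth {D : Type} [Nonempty D]
    (R : D → D → Prop) (φ : FOF) (σ : ℕ → D) :
    (FOSat R σ φ ↔ ∀ w : WR R, MSat ![V₁ R, V₂ R] w σ (tr φ)) ∧
    (FOSat R σ φ ↔ ∃ w : WR R, MSat ![V₁ R, V₂ R] w σ (tr φ)) := by
  constructor
  · constructor
    · intro h w; exact (key R φ σ w).mp h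
    · intro h; exact (key R φ σ none).mpr (h none)
  · constructor
    · intro h; exact ⟨none, (key R φ σ none).mp h⟩
    · rintro ⟨w, h⟩; exact (key R φ σ w).mpr h
end
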